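/- For every ε ≥ P_c(X), the privacy-aware guessing function satisfies P_c(Y) ≤ h(P_{XY}, ε) ≤ 1, and h(P_{XY}, ε) = 1 if and only if ε ≥ P_c(X|Y). -/

import Mathlib

noncomputable section

/-- A row-stochastic matrix (channel) from an `n`-ary input to a `k`-ary output. -/
def IsStoch {n k : ℕ} (F : Fin n → Fin k → ℝ) : Prop :=
  (∀ y z, 0 ≤ F y z) ∧ ∀ y, ∑ z, F y z = 1

/-- A joint pmf on `{1,…,m} × {1,…,n}`. -/
def IsPmf {m n : ℕ} (P : Fin m → Fin n → ℝ) : Prop :=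
  (∀ x y, 0 ≤ P x y) ∧ ∑ x, ∑ y, P x y = 1

/-- `P_c(X) = max_x P_X(x)`. -/
def pcX {m n : ℕ} (P : Fin m → Fin n → ℝ) : ℝ := ⨆ x, ∑ y, P x y

/-- `P_c(Y) = max_y P_Y(y)`. -/
def pcY {m n : ℕ} (P : Fin m → Fin n → ℝ) : ℝ := ⨆ y, ∑ x, P x y

/-- `P_c(X|Y) = Σ_y max_x P_{XY}(x,y)`. -/
def pcXgY {m n : ℕ} (P : Fin m → Fin n → ℝ) : ℝ := ∑ y, ⨆ x, P x y

/-- `𝒫(F) = P_c(X|Z) = Σ_z max_x Σ_y P_{XY}(x,y) F(y,z)` for a filter `F = P_{Z|Y}`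
under the Markov chain `X – Y – Z`. -/
def privP {m n k : ℕ} (P : Fin m → Fin n → ℝ) (F : Fin n → Fin k → ℝ) : ℝ :=
  ∑ z, ⨆ x, ∑ y, P x y * F y z

/-- `𝒰(F) = P_c(Y|Z) = Σ_z max_y P_Y(y) F(y,z)` for a filter `F = P_{Z|Y}`. -/
def privU {m n k : ℕ} (P : Fin m → Fin n → ℝ) (F : Fin n → Fin k → ℝ) : ℝ :=
  ∑ z, ⨆ y, (∑ x, P x y) * F y z

/-- The set `ℱ` of privacy filters: `n × (n+1)` row-stochastic matrices. -/
def filtSet (n : ℕ) : Set (Fin n → Fin (n + 1) → ℝ) := {F | IsStoch F}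

/-- The privacy-aware guessing function
`h(P_{XY}, ε) = max { 𝒰(F) : F ∈ ℱ, 𝒫(F) ≤ ε }`. -/
def hFun {m n : ℕ} (P : Fin m → Fin n → ℝ) (ε : ℝ) : ℝ :=
  sSup {u | ∃ F ∈ filtSet n, privP P F ≤ ε ∧ privU P F = u}

/-- On a nonempty `Fin n`, a real function attains its supremum. -/
private lemma fin_exists_max {n : ℕ} (hn : 0 < n) (f : Fin n → ℝ) :
    ∃ i, (∀ j, f j ≤ f i) ∧ (⨆ j, f j) = f i := by
  haveI : Nonempty (Fin n) := ⟨⟨0, hn⟩⟩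
  obtain ⟨i, hi⟩ := Finite.exists_max f
  exact ⟨i, hi, le_antisymm (ciSup_le hi) (le_ciSup (Set.finite_range f).bddAbove i)⟩

private lemma ciSup_ite_eq {n : ℕ} (f : Fin n → ℝ) (i : Fin n) (hf : 0 ≤ f i) :
    (⨆ j, if i = j then f j else 0) = f i := by
  haveI : Nonempty (Fin n) := ⟨i⟩
  refine le_antisymm (ciSup_le fun j => ?_) ?_
  · by_cases h : i = j
    · subst h; simp
    · simp [h, hf]
  · have := le_ciSup (f := fun j => if i = j then f j else 0)
      (Set.finite_range _).bddAbove i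
    simpa using this

private lemma sup_le_sum {m n : ℕ} (hM : 0 < m) (P : Fin m → Fin n → ℝ)
    (hP : ∀ x y, 0 ≤ P x y) (y : Fin n) : (⨆ x, P x y) ≤ ∑ x, P x y := by
  obtain ⟨x0, _, heq⟩ := fin_exists_max hM (fun x => P x y)
  rw [heq]
  exact Finset.single_le_sum (fun x _ => hP x y) (Finset.mem_univ x0)

private lemma privU_le_one {M N k : ℕ} (hM : 0 < M) (hN : 0 < N)
    (P : Fin M → Fin N → ℝ) (hP : IsPmf P) {F : Fin N → Fin k → ℝ}
    (hF : IsStoch F) : privU P F ≤ 1 := by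
  have hq : ∀ y, 0 ≤ ∑ x, P x y := fun y => Finset.sum_nonneg fun x _ => hP.1 x y
  have h1 : ∑ y, ∑ x, P x y = 1 := by rw [Finset.sum_comm]; exact hP.2
  calc privU P F ≤ ∑ z, ∑ y, (∑ x, P x y) * F y z := by
        apply Finset.sum_le_sum
        intro z _
        obtain ⟨y0, _, heq⟩ := fin_exists_max hN (fun y => (∑ x, P x y) * F y z)
        rw [heq]
        exact Finset.single_le_sum (fun y _ => mul_nonneg (hq y) (hF.1 y z))
          (Finset.mem_univ y0)
    _ = ∑ y, (∑ x, P x y) * ∑ z, F y z := by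
        rw [Finset.sum_comm]; simp [Finset.mul_sum]
    _ = 1 := by simp only [hF.2, mul_one]; exact h1

/-- Key inequality: `𝒰(F) + P_c(X|Y) ≤ 1 + 𝒫(F)`. -/
private lemma key_ineq {M N k : ℕ} (hM : 0 < M) (hN : 0 < N)
    (P : Fin M → Fin N → ℝ) (hP : IsPmf P) {F : Fin N → Fin k → ℝ}
    (hF : IsStoch F) : privU P F + pcXgY P ≤ 1 + privP P F := by
  haveI : Nonempty (Fin M) := ⟨⟨0, hM⟩⟩
  haveI : Nonempty (Fin N) := ⟨⟨0, hN⟩⟩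
  set q : Fin N → ℝ := fun y => ∑ x, P x y with hqdef
  have hq0 : ∀ y, 0 ≤ q y := fun y => Finset.sum_nonneg fun x _ => hP.1 x y
  choose ystar hy1 hy2 using fun z : Fin k => fin_exists_max hN (fun y => q y * F y z)
  choose xstar hx1 hx2 using fun z : Fin k => fin_exists_max hM (fun x => P x (ystar z))
  have hU : privU P F = ∑ z, q (ystar z) * F (ystar z) z :=
    Finset.sum_congr rfl fun z _ => hy2 z
  have hXgY : pcXgY P = ∑ z, ∑ y, (⨆ x, P x y) * F y z := by
    rw [Finset.sum_comm]
    refine Finset.sum_congr rfl fun y _ => ?_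
    rw [← Finset.mul_sum, hF.2 y, mul_one]
  have h1 : (1:ℝ) = ∑ z, ∑ y, q y * F y z := by
    rw [Finset.sum_comm]
    have : ∀ y, ∑ z, q y * F y z = q y := by
      intro y; rw [← Finset.mul_sum, hF.2 y, mul_one]
    rw [Finset.sum_congr rfl fun y _ => this y]
    rw [hqdef]
    rw [Finset.sum_comm]; exact (hP.2).symm
  have hPge : ∑ z, ∑ y, P (xstar z) y * F y z ≤ privP P F := by
    apply Finset.sum_le_sum
    intro z _
    exact le_ciSup (f := fun x => ∑ y, P x y * F y z)
      (Set.finite_range _).bddAbove (xstar z)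
  rw [hU, hXgY, h1]
  refine le_trans ?_ (add_le_add le_rfl hPge)
  rw [← Finset.sum_add_distrib, ← Finset.sum_add_distrib]
  apply Finset.sum_le_sum
  intro z _
  have hrw : q (ystar z) * F (ystar z) z
      = ∑ y, if ystar z = y then q y * F y z else 0 := by
    rw [Finset.sum_ite_eq]; simp
  rw [hrw, ← Finset.sum_add_distrib, ← Finset.sum_add_distrib]
  apply Finset.sum_le_sum
  intro y _
  by_cases h : ystar z = y
  · subst h
    have hxeq : (⨆ x, P x (ystar z)) = P (xstar z) (ystar z) := hx2 z
    rw [hxeq]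
    simp
  · simp only [if_neg h, zero_add]
    have h1' : (⨆ x, P x y) * F y z ≤ q y * F y z :=
      mul_le_mul_of_nonneg_right (sup_le_sum hM P hP.1 y) (hF.1 y z)
    have h2' : 0 ≤ P (xstar z) y * F y z := mul_nonneg (hP.1 _ _) (hF.1 y z)
    linarith

/-- For every `ε ≥ P_c(X)`: `P_c(Y) ≤ h(P_{XY}, ε) ≤ 1`, with `h(P_{XY}, ε) = 1` if and
only if `ε ≥ P_c(X|Y)`. -/
theorem hFun_bounds {M N : ℕ} (hM : 0 < M) (hN : 0 < N)
    (P : Fin M → Fin N → ℝ) (hP : IsPmf P) (ε : ℝ) (hε : pcX P ≤ ε) :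
    pcY P ≤ hFun P ε ∧ hFun P ε ≤ 1 ∧ (hFun P ε = 1 ↔ pcXgY P ≤ ε) := by
  haveI : Nonempty (Fin M) := ⟨⟨0, hM⟩⟩
  haveI : Nonempty (Fin N) := ⟨⟨0, hN⟩⟩
  set S := {u | ∃ F ∈ filtSet N, privP P F ≤ ε ∧ privU P F = u} with hS
  have hq0 : ∀ y, 0 ≤ ∑ x, P x y := fun y => Finset.sum_nonneg fun x _ => hP.1 x y
  -- S is bounded above by 1
  have hbdd : ∀ u ∈ S, u ≤ 1 := by
    rintro u ⟨F, hF, _, rfl⟩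
    exact privU_le_one hM hN P hP hF
  have hBddAbove : BddAbove S := ⟨1, hbdd⟩
  -- the constant filter
  have hmemY : pcY P ∈ S := by
    refine ⟨fun _ z => if z = 0 then 1 else 0, ⟨fun y z => by positivity, fun y => by
      simp⟩, ?_, ?_⟩
    · have : privP P (fun _ z => if z = (0 : Fin (N+1)) then (1:ℝ) else 0) = pcX P := by
        unfold privP
        have hterm : ∀ z : Fin (N+1),
            (⨆ x, ∑ y, P x y * if z = 0 then (1:ℝ) else 0)
            = if z = 0 then pcX P else 0 := by
          intro z
          by_cases h : z = 0
          · subst h; simp [pcX]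
          · simp [h, ciSup_const]
        rw [Finset.sum_congr rfl fun z _ => hterm z]
        simp
      rw [this]; exact hε
    · unfold privU
      have hterm : ∀ z : Fin (N+1),
          (⨆ y, (∑ x, P x y) * if z = 0 then (1:ℝ) else 0)
          = if z = 0 then pcY P else 0 := by
        intro z
        by_cases h : z = 0
        · subst h; simp [pcY]
        · simp [h, ciSup_const]
      rw [Finset.sum_congr rfl fun z _ => hterm z]
      simp
  have hSne : S.Nonempty := ⟨_, hmemY⟩
  have hle1 : hFun P ε ≤ 1 := Real.sSup_le hbdd zero_le_one
  have hgeY : pcY P ≤ hFun P ε := le_csSup hBddAbove hmemY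
  refine ⟨hgeY, hle1, ?_, ?_⟩
  · -- hFun = 1 → pcXgY ≤ ε
    intro h1
    by_contra hcon
    push_neg at hcon
    have : hFun P ε ≤ 1 + ε - pcXgY P := by
      apply csSup_le hSne
      rintro u ⟨F, hF, hPle, rfl⟩
      have := key_ineq hM hN P hP hF
      linarith
    rw [h1] at this
    linarith
  · -- pcXgY ≤ ε → hFun = 1
    intro hle
    refine le_antisymm hle1 ?_
    -- identity filter
    have hmem1 : (1:ℝ) ∈ S := by
      refine ⟨fun y z => if z = Fin.castSucc y then 1 else 0,
        ⟨fun y z => by positivity, fun y => by simp⟩, ?_, ?_⟩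
      · have : privP P (fun y z => if z = Fin.castSucc y then (1:ℝ) else 0)
            = pcXgY P := by
          unfold privP
          rw [Fin.sum_univ_castSucc]
          have hlast : (⨆ x, ∑ y, P x y *
              if Fin.last N = Fin.castSucc y then (1:ℝ) else 0) = 0 := by
            have : ∀ y : Fin N, Fin.last N ≠ Fin.castSucc y :=
              fun y => (Fin.castSucc_lt_last y).ne'
            simp [this, ciSup_const]
          rw [hlast, add_zero]
          unfold pcXgY
          refine Finset.sum_congr rfl fun y' _ => ?_
          have : ∀ x, (∑ y, P x y *
              if Fin.castSucc y' = Fin.castSucc y then (1:ℝ) else 0) = P x y' := by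
            intro x
            simp [Fin.castSucc_inj, mul_ite, Finset.sum_ite_eq]
          exact iSup_congr this
        rw [this]; exact hle
      · unfold privU
        rw [Fin.sum_univ_castSucc]
        have hlast : (⨆ y, (∑ x, P x y) *
            if Fin.last N = Fin.castSucc y then (1:ℝ) else 0) = 0 := by
          have : ∀ y : Fin N, Fin.last N ≠ Fin.castSucc y :=
            fun y => (Fin.castSucc_lt_last y).ne'
          simp [this, ciSup_const]
        rw [hlast, add_zero]
        have hterm : ∀ y' : Fin N, (⨆ y, (∑ x, P x y) *
            if Fin.castSucc y' = Fin.castSucc y then (1:ℝ) else 0)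
            = ∑ x, P x y' := by
          intro y'
          have heq : ∀ y, (∑ x, P x y) *
              (if Fin.castSucc y' = Fin.castSucc y then (1:ℝ) else 0)
              = if y' = y then (∑ x, P x y) else 0 := by
            intro y
            simp [Fin.castSucc_inj, mul_ite]
          rw [iSup_congr heq]
          exact ciSup_ite_eq _ y' (hq0 y')
        rw [Finset.sum_congr rfl fun y' _ => hterm y']
        rw [Finset.sum_comm]; exact hP.2
    exact le_csSup hBddAbove hmem1
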